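/- arXiv:1007.1964 — 4 statements merged into one kernel-verified Lean document; each statement's English description precedes it below -/
import Mathlib

section
/- Let (B_i)_{i ∈ I} be a family of unital C*-algebras, each of stable rank 1 (that is, the invertible elements of B_i are dense in B_i). Then the product C*-algebra ∏_{i ∈ I} B_i, consisting of all bounded families (b_i) with b_i ∈ B_i, equipped with pointwise operations and the supremum norm, has stable rank 1: its invertible elements are dense. -/
open ENNReal

section Aux

private lemma aux_sub_bound {ε t : ℝ} (hε : 0 < ε) (ht : 0 < t) :
    |(1 - max 1 (ε / Real.sqrt t)) * (t * (1 - max 1 (ε / Real.sqrt t)))| ≤ ε ^ 2 := by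
  set s := Real.sqrt t with hs
  have hs0 : 0 < s := Real.sqrt_pos.mpr ht
  have hst : s ^ 2 = t := Real.sq_sqrt ht.le
  rcases le_total (ε / s) 1 with hle | hle
  · rw [max_eq_left hle]
    simp only [sub_self, zero_mul, mul_zero, abs_zero]
    positivity
  · rw [max_eq_right hle]
    have hse : s ≤ ε := (one_le_div hs0).mp hle
    have key : (1 - ε / s) * (t * (1 - ε / s)) = (s - ε) ^ 2 := by
      field_simp
      nlinarith [hst]
    rw [key, abs_of_nonneg (sq_nonneg _)]
    nlinarith
  
private lemma aux_mul_eq {ε t : ℝ} (hε : 0 < ε) (ht : 0 < t) :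
    max 1 (ε / Real.sqrt t) * (t * max 1 (ε / Real.sqrt t)) = max t (ε ^ 2) := by
  set s := Real.sqrt t with hs
  have hs0 : 0 < s := Real.sqrt_pos.mpr ht
  have hst : s ^ 2 = t := Real.sq_sqrt ht.le
  rcases le_total (ε / s) 1 with hle | hle
  · have hse : ε ≤ s := (div_le_one hs0).mp hle
    rw [max_eq_left hle, max_eq_left (by nlinarith)]
    ring
  · have hse : s ≤ ε := (one_le_div hs0).mp hle
    rw [max_eq_right hle, max_eq_right (by nlinarith)]
    field_simp
    nlinarith [hst]

/-- Quantitative stable rank one approximation in a single C*-algebra: any element can be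
approximated by an invertible whose inverse has norm at most `ε⁻¹`. -/
private lemma approx_unit {A : Type*} [CStarAlgebra A] (hA : Dense {x : A | IsUnit x})
    (a : A) {ε : ℝ} (hε : 0 < ε) :
    ∃ c c' : A, c' * c = 1 ∧ c * c' = 1 ∧ ‖c'‖ ≤ ε⁻¹ ∧ ‖a - c‖ ≤ 2 * ε := by
  obtain ⟨b, hb_ball, hb⟩ := Metric.dense_iff.mp hA a ε hε
  have hab : ‖a - b‖ ≤ ε := by
    have := Metric.mem_ball.mp hb_ball
    rw [dist_eq_norm] at this
    rw [← norm_neg, neg_sub]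
    exact this.le
  set p : A := star b * b with hp_def
  have hp_sa : IsSelfAdjoint p := IsSelfAdjoint.star_mul_self b
  have hp_unit : IsUnit p := hb.star.mul hb
  have hspec : ∀ t ∈ spectrum ℝ p, 0 < t := by
    intro t ht
    have h0 : (0 : ℝ) ∉ spectrum ℝ p := spectrum.zero_notMem ℝ hp_unit
    have hnn : 0 ≤ t := spectrum_star_mul_self_nonneg t ht
    exact hnn.lt_of_ne (fun h => h0 (h ▸ ht))
  set g : ℝ → ℝ := fun t => max 1 (ε / Real.sqrt t) with hg_def
  have hg : ContinuousOn g (spectrum ℝ p) := by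
    apply ContinuousOn.sup continuousOn_const
    exact continuousOn_const.div Real.continuous_sqrt.continuousOn
      (fun t ht => (Real.sqrt_pos.mpr (hspec t ht)).ne')
  set d : A := cfc g p with hd_def
  have hd_sa : IsSelfAdjoint d := cfc_predicate g p
  set c : A := b * d with hc_def
  -- the function `m` is the "truncated" square modulus
  set m : ℝ → ℝ := fun t => max t (ε ^ 2) with hm_def
  have hm : ContinuousOn m (spectrum ℝ p) := ContinuousOn.sup continuousOn_id continuousOn_const
  have hm_pos : ∀ t ∈ spectrum ℝ p, 0 < m t := fun t _ =>
    lt_of_lt_of_le (by positivity) (le_max_right _ _)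
  have hminv : ContinuousOn (fun t => (m t)⁻¹) (spectrum ℝ p) :=
    hm.inv₀ (fun t ht => (hm_pos t ht).ne')
  -- `star c * c = cfc m p`
  have hscc : star c * c = cfc m p := by
    have h1 : star c * c = d * (p * d) := by
      rw [hc_def, star_mul, hd_sa.star_eq, hp_def]
      simp only [mul_assoc]
    have e1 : cfc (fun t : ℝ => t * g t) p = p * cfc g p := by
      have h := cfc_mul (fun t : ℝ => t) g p continuousOn_id hg
      rw [cfc_id' ℝ p hp_sa] at h
      exact h
    have e2 : cfc (fun t : ℝ => g t * (t * g t)) p = d * (p * d) := by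
      have h := cfc_mul g (fun t : ℝ => t * g t) p hg (continuousOn_id.mul hg)
      rw [e1] at h
      rw [hd_def]
      exact h
    rw [h1, ← e2]
    exact cfc_congr (fun t ht => aux_mul_eq hε (hspec t ht))
  set q : A := cfc (fun t => (m t)⁻¹) p with hq_def
  have hq_sa : IsSelfAdjoint q := cfc_predicate _ p
  have hqm : q * cfc m p = 1 := by
    rw [hq_def, ← cfc_mul _ _ p hminv hm,
      cfc_congr (g := fun _ => (1 : ℝ)) (fun t ht => inv_mul_cancel₀ (hm_pos t ht).ne')]
    exact cfc_const_one ℝ p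
  have hmq : cfc m p * q = 1 := by
    rw [hq_def, ← cfc_mul _ _ p hm hminv,
      cfc_congr (g := fun _ => (1 : ℝ)) (fun t ht => mul_inv_cancel₀ (hm_pos t ht).ne')]
    exact cfc_const_one ℝ p
  have hd_unit : IsUnit d :=
    isUnit_cfc g p hg hp_sa (fun t _ => (lt_of_lt_of_le one_pos (le_max_left 1 (ε / Real.sqrt t))).ne')
  have hc_unit : IsUnit c := hb.mul hd_unit
  set c' : A := q * star c with hc'_def
  have h1 : c' * c = 1 := by rw [hc'_def, mul_assoc, hscc, hqm]
  have h2 : c * c' = 1 := by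
    obtain ⟨u, hu⟩ := hc_unit
    have : c' = ↑u⁻¹ := left_inv_eq_right_inv h1 (by rw [← hu]; exact u.mul_inv)
    rw [this, ← hu]; exact u.mul_inv
  refine ⟨c, c', h1, h2, ?_, ?_⟩
  · -- norm bound on the inverse
    have hcsc' : c' * star c' = q := by
      have hsc' : star c' = c * q := by
        rw [hc'_def, star_mul, star_star, hq_sa.star_eq]
      rw [hsc', hc'_def, mul_assoc, ← mul_assoc (star c), hscc, hmq, mul_one]
    have hqnorm : ‖q‖ ≤ ε⁻¹ * ε⁻¹ := by
      apply norm_cfc_le (by positivity)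
      intro t ht
      rw [Real.norm_eq_abs, abs_of_pos (by positivity)]
      have h1 : ε ^ 2 ≤ m t := le_max_right _ _
      have h2 : (m t)⁻¹ ≤ (ε ^ 2)⁻¹ := inv_anti₀ (by positivity) h1
      calc (m t)⁻¹ ≤ (ε ^ 2)⁻¹ := h2
        _ = ε⁻¹ * ε⁻¹ := by rw [sq, mul_inv]
    have hns : ‖c'‖ * ‖c'‖ ≤ ε⁻¹ * ε⁻¹ := by
      rw [← CStarRing.norm_self_mul_star, hcsc']
      exact hqnorm
    nlinarith [norm_nonneg c', inv_nonneg.mpr hε.le]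
  · -- distance bound
    have hbc : ‖b - c‖ ≤ ε := by
      have heq : b - c = b * cfc (fun t => 1 - g t) p := by
        rw [cfc_sub _ _ p continuousOn_const hg, cfc_const_one ℝ p, mul_sub, mul_one, hc_def,
          hd_def]
      set e : A := cfc (fun t => 1 - g t) p with he_def
      have he_cont : ContinuousOn (fun t => 1 - g t) (spectrum ℝ p) := continuousOn_const.sub hg
      have he_sa : IsSelfAdjoint e := cfc_predicate _ p
      have f1 : cfc (fun t : ℝ => t * (1 - g t)) p = p * e := by
        have hh := cfc_mul (fun t : ℝ => t) (fun t => 1 - g t) p continuousOn_id he_cont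
        rw [cfc_id' ℝ p hp_sa] at hh
        rw [he_def]
        exact hh
      have hepe : cfc (fun t : ℝ => (1 - g t) * (t * (1 - g t))) p = e * (p * e) := by
        have hh := cfc_mul (fun t => 1 - g t) (fun t : ℝ => t * (1 - g t)) p he_cont
          (continuousOn_id.mul he_cont)
        rw [f1] at hh
        rw [he_def]
        exact hh
      have hnorm2 : ‖b - c‖ * ‖b - c‖ ≤ ε * ε := by
        rw [heq, ← CStarRing.norm_star_mul_self]
        have : star (b * e) * (b * e) = e * (p * e) := by
          rw [star_mul, he_sa.star_eq, hp_def]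
          simp only [mul_assoc]
        rw [this, ← hepe]
        apply norm_cfc_le (by positivity)
        intro t ht
        rw [Real.norm_eq_abs]
        calc |(1 - g t) * (t * (1 - g t))| ≤ ε ^ 2 := aux_sub_bound hε (hspec t ht)
          _ = ε * ε := sq ε
      nlinarith [norm_nonneg (b - c), hε.le]
    calc ‖a - c‖ = ‖(a - b) + (b - c)‖ := by rw [sub_add_sub_cancel]
      _ ≤ ‖a - b‖ + ‖b - c‖ := norm_add_le _ _
      _ ≤ ε + ε := add_le_add hab hbc
      _ = 2 * ε := by ring

end Aux

/-- If `(B i)` is a family of unital C*-algebras each of stable rank one (the invertible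
elements are dense), then the ℓ∞-product `∏ᵢ Bᵢ` (bounded families with the sup norm,
realized as `lp B ∞`) has stable rank one: its invertible elements are dense. -/
theorem stableRankOne_lp_infty {I : Type*} (B : I → Type*)
    [∀ i, CStarAlgebra (B i)] [∀ i, Nontrivial (B i)]
    (h : ∀ i, Dense {x : B i | IsUnit x}) :
    Dense {x : lp B ∞ | IsUnit x} := by
  rw [Metric.dense_iff]
  intro f r hr
  set ε : ℝ := r / 3 with hε_def
  have hε : 0 < ε := by positivity
  have key : ∀ i, ∃ c c' : B i, c' * c = 1 ∧ c * c' = 1 ∧ ‖c'‖ ≤ ε⁻¹ ∧ ‖f i - c‖ ≤ 2 * ε :=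
    fun i => approx_unit (h i) (f i) hε
  choose c c' hc'c hcc' hnc' hfc using key
  have hc_mem : Memℓp c ∞ := by
    apply memℓp_infty
    refine ⟨‖f‖ + 2 * ε, ?_⟩
    rintro - ⟨i, rfl⟩
    calc ‖c i‖ = ‖f i - (f i - c i)‖ := (congrArg Norm.norm (sub_sub_cancel (f i) (c i))).symm
      _ ≤ ‖f i‖ + ‖f i - c i‖ := norm_sub_le _ _
      _ ≤ ‖f‖ + 2 * ε := add_le_add (lp.norm_apply_le_norm ENNReal.top_ne_zero f i) (hfc i)
  have hc'_mem : Memℓp c' ∞ := by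
    apply memℓp_infty
    exact ⟨ε⁻¹, by rintro - ⟨i, rfl⟩; exact hnc' i⟩
  set C : lp B ∞ := ⟨c, hc_mem⟩ with hC_def
  set C' : lp B ∞ := ⟨c', hc'_mem⟩ with hC'_def
  have hmul1 : C' * C = 1 := by
    ext i
    rw [lp.infty_coeFn_mul]
    have : (1 : lp B ∞) i = 1 := by rw [lp.infty_coeFn_one]; rfl
    rw [this]
    exact hc'c i
  have hmul2 : C * C' = 1 := by
    ext i
    rw [lp.infty_coeFn_mul]
    have : (1 : lp B ∞) i = 1 := by rw [lp.infty_coeFn_one]; rfl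
    rw [this]
    exact hcc' i
  refine ⟨C, Metric.mem_ball.mpr ?_, ?_⟩
  · rw [dist_eq_norm]
    have : ‖C - f‖ ≤ 2 * ε := by
      apply lp.norm_le_of_forall_le (by positivity)
      intro i
      have : (C - f) i = c i - f i := by rw [lp.coeFn_sub]; rfl
      rw [this, ← norm_neg, neg_sub]
      exact hfc i
    calc ‖C - f‖ ≤ 2 * ε := this
      _ < r := by rw [hε_def]; linarith
  · exact ⟨⟨C, C', hmul2, hmul1⟩, rfl⟩
end

section
/- For integers 0 < p < q, let A_{p,q} denote the C*-algebra of continuous functions f : [0,1] → M_q(ℂ) such that f(0) = μ·(1_p ⊕ 0_{q−p}) and f(1) = λ·1_q for some scalars μ, λ ∈ ℂ. Then the minimal unitization of A_{p,q} is *-isomorphic to the minimal unitization of A_{q−p,q}. -/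
/-!
Conjugating pointwise by the cyclic shift `i ↦ i + p` of `Fin q` turns `1_p ⊕ 0_{q-p}` into
`1_q - (1_{q-p} ⊕ 0_p)` and fixes `1_q`, so it maps `A_{p,q}` into `A_{q-p,q} + ℂ·1`, and its
inverse maps `A_{q-p,q}` into `A_{p,q} + ℂ·1`. Neither algebra contains `1`, so each unitization is
the unital star subalgebra `A + ℂ·1` generated by the algebra, and the conjugation restricts to an
isomorphism between these.
-/

open Matrix

noncomputable section

/-- The diagonal `q × q` projection with `1` in the first `p` diagonal entries. -/
def diagProj (p q : ℕ) : Matrix (Fin q) (Fin q) ℂ :=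
  Matrix.diagonal fun i => if (i : ℕ) < p then (1 : ℂ) else 0

lemma diagProj_mul_self (p q : ℕ) : diagProj p q * diagProj p q = diagProj p q := by
  have h : (fun i : Fin q => (if (i : ℕ) < p then (1 : ℂ) else 0) *
      (if (i : ℕ) < p then (1 : ℂ) else 0)) =
      fun i : Fin q => if (i : ℕ) < p then (1 : ℂ) else 0 := by
    funext i; by_cases h : (i : ℕ) < p <;> simp [h]
  rw [diagProj, Matrix.diagonal_mul_diagonal, h]

lemma diagProj_star (p q : ℕ) : star (diagProj p q) = diagProj p q := by
  have h : (star fun i : Fin q => if (i : ℕ) < p then (1 : ℂ) else 0) =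
      fun i : Fin q => if (i : ℕ) < p then (1 : ℂ) else 0 := by
    funext i; by_cases h : (i : ℕ) < p <;> simp [h]
  rw [diagProj, Matrix.star_eq_conjTranspose, Matrix.diagonal_conjTranspose, h]

/-- The 1-dimensional NCCW complex `A_{p,q}`: continuous functions
`f : [0,1] → M_q(ℂ)` with `f 0 = μ·(1_p ⊕ 0_{q-p})` and `f 1 = λ·1_q` for some scalars
`μ, λ ∈ ℂ`, as a non-unital ∗-subalgebra of `C([0,1], M_q(ℂ))`. -/
def Apq (p q : ℕ) :
    NonUnitalStarSubalgebra ℂ C(unitInterval, Matrix (Fin q) (Fin q) ℂ) where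
  carrier := {f | ∃ μ lam : ℂ,
    f 0 = μ • diagProj p q ∧ f 1 = lam • (1 : Matrix (Fin q) (Fin q) ℂ)}
  add_mem' := by
    rintro f g ⟨μ₁, l₁, h₁0, h₁1⟩ ⟨μ₂, l₂, h₂0, h₂1⟩
    exact ⟨μ₁ + μ₂, l₁ + l₂, by simp [h₁0, h₂0, add_smul], by simp [h₁1, h₂1, add_smul]⟩
  zero_mem' := ⟨0, 0, by simp, by simp⟩
  mul_mem' := by
    rintro f g ⟨μ₁, l₁, h₁0, h₁1⟩ ⟨μ₂, l₂, h₂0, h₂1⟩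
    refine ⟨μ₁ * μ₂, l₁ * l₂, ?_, ?_⟩
    · rw [ContinuousMap.mul_apply, h₁0, h₂0, smul_mul_smul_comm, diagProj_mul_self]
    · rw [ContinuousMap.mul_apply, h₁1, h₂1, smul_mul_smul_comm, one_mul]
  smul_mem' := by
    rintro c f ⟨μ, l, h0, h1⟩
    exact ⟨c * μ, c * l, by simp [h0, smul_smul], by simp [h1, smul_smul]⟩
  star_mem' := by
    rintro f ⟨μ, l, h0, h1⟩
    refine ⟨star μ, star l, ?_, ?_⟩
    · rw [ContinuousMap.star_apply, h0, star_smul, diagProj_star]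
    · rw [ContinuousMap.star_apply, h1, star_smul, star_one]

namespace StarAlgEquiv

variable {R A B : Type*} [CommSemiring R] [StarRing R] [Semiring A] [StarRing A] [Algebra R A]
  [StarModule R A] [Semiring B] [StarRing B] [Algebra R B] [StarModule R B]

def adjoinCongr (e : A ≃⋆ₐ[R] B) {s : Set A} {t : Set B}
    (hs : ∀ a ∈ s, e a ∈ StarAlgebra.adjoin R t) (ht : ∀ b ∈ t, e.symm b ∈ StarAlgebra.adjoin R s) :
    StarAlgebra.adjoin R s ≃⋆ₐ[R] StarAlgebra.adjoin R t :=
  have hst : StarAlgebra.adjoin R s ≤ (StarAlgebra.adjoin R t).comap (e : A →⋆ₐ[R] B) :=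
    StarAlgebra.adjoin_le hs
  have hts : StarAlgebra.adjoin R t ≤ (StarAlgebra.adjoin R s).comap (e.symm : B →⋆ₐ[R] A) :=
    StarAlgebra.adjoin_le ht
  ofStarAlgHom (((e : A →⋆ₐ[R] B).comp (StarAlgebra.adjoin R s).subtype).codRestrict _
      fun x => hst x.2)
    (((e.symm : B →⋆ₐ[R] A).comp (StarAlgebra.adjoin R t).subtype).codRestrict _
      fun y => hts y.2)
    (StarAlgHom.ext fun x => Subtype.ext (e.symm_apply_apply x))
    (StarAlgHom.ext fun y => Subtype.ext (e.apply_symm_apply y))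

end StarAlgEquiv

namespace Matrix

variable (R A : Type*) {m n : Type*} [Fintype m] [Fintype n] [DecidableEq m] [DecidableEq n]
  [CommSemiring R] [Semiring A] [StarRing A] [Algebra R A]

def reindexStarAlgEquiv (e : m ≃ n) : Matrix m m A ≃⋆ₐ[R] Matrix n n A :=
  .ofAlgEquiv (reindexAlgEquiv R A e) fun M => (conjTranspose_reindex e e M).symm

@[simp]
theorem coe_reindexStarAlgEquiv (e : m ≃ n) : ⇑(reindexStarAlgEquiv R A e) = reindex e e :=
  rfl

end Matrix

namespace ContinuousMap

section

variable (X : Type*) {𝕜 A B : Type*} [TopologicalSpace X] [CommSemiring 𝕜]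
  [TopologicalSpace A] [Semiring A] [IsTopologicalSemiring A] [StarRing A] [ContinuousStar A]
  [Algebra 𝕜 A] [TopologicalSpace B] [Semiring B] [IsTopologicalSemiring B] [StarRing B]
  [ContinuousStar B] [Algebra 𝕜 B]

def compStarAlgEquiv (φ : A ≃⋆ₐ[𝕜] B) (hφ : Continuous φ) (hφ' : Continuous φ.symm) :
    C(X, A) ≃⋆ₐ[𝕜] C(X, B) :=
  .ofStarAlgHom (compStarAlgHom X (φ : A →⋆ₐ[𝕜] B) hφ)
    (compStarAlgHom X (φ.symm : B →⋆ₐ[𝕜] A) hφ')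
    (StarAlgHom.ext fun f => ext fun x => φ.symm_apply_apply (f x))
    (StarAlgHom.ext fun f => ext fun x => φ.apply_symm_apply (f x))

end

section

variable (X R A : Type*) {m n : Type*} [TopologicalSpace X] [Fintype m] [Fintype n]
  [DecidableEq m] [DecidableEq n] [CommSemiring R] [TopologicalSpace A] [Semiring A]
  [IsTopologicalSemiring A] [StarRing A] [ContinuousStar A] [Algebra R A]

def reindexStarAlgEquiv (e : m ≃ n) : C(X, Matrix m m A) ≃⋆ₐ[R] C(X, Matrix n n A) :=
  compStarAlgEquiv X (Matrix.reindexStarAlgEquiv R A e) (continuous_id.matrix_reindex e e)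
    (continuous_id.matrix_reindex e.symm e.symm)

theorem reindexStarAlgEquiv_apply (e : m ≃ n) (f : C(X, Matrix m m A)) (x : X) :
    reindexStarAlgEquiv X R A e f x = Matrix.reindexStarAlgEquiv R A e (f x) :=
  rfl

end

end ContinuousMap

section Apq

variable {p r q : ℕ}

theorem one_sub_diagProj (p q : ℕ) :
    1 - diagProj p q = diagonal fun i : Fin q => if (i : ℕ) < p then 0 else 1 := by
  rw [diagProj, ← diagonal_one, diagonal_sub]
  congr 1
  funext i
  split_ifs <;> simp

theorem reindex_diagProj (σ : Equiv.Perm (Fin q)) (hσ : ∀ i, (σ.symm i : ℕ) < p ↔ r ≤ i) :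
    reindex σ σ (diagProj p q) = 1 - diagProj r q := by
  rw [one_sub_diagProj, diagProj, reindex_apply, submatrix_diagonal_equiv]
  congr 1
  funext i
  simp only [Function.comp_apply, hσ, ← not_lt]
  split_ifs <;> rfl

theorem one_notMem_Apq (h : p < q) :
    (1 : C(unitInterval, Matrix (Fin q) (Fin q) ℂ)) ∉ Apq p q := by
  rintro ⟨μ, lam, h0, -⟩
  have h := congrFun₂ h0 ⟨p, h⟩ ⟨p, h⟩
  simp [diagProj] at h

open ContinuousMap in
theorem reindex_mem_adjoin_Apq (σ : Equiv.Perm (Fin q)) (hσ : ∀ i, (σ.symm i : ℕ) < p ↔ r ≤ i)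
    {f : C(unitInterval, Matrix (Fin q) (Fin q) ℂ)} (hf : f ∈ Apq p q) :
    reindexStarAlgEquiv unitInterval ℂ ℂ σ f ∈
      StarAlgebra.adjoin ℂ (Apq r q : Set C(unitInterval, Matrix (Fin q) (Fin q) ℂ)) := by
  obtain ⟨μ, lam, h0, h1⟩ := hf
  set g := reindexStarAlgEquiv unitInterval ℂ ℂ σ f
  have hg : g - μ • 1 ∈ Apq r q := by
    refine ⟨-μ, lam - μ, ?_, ?_⟩
    · rw [ContinuousMap.sub_apply, ContinuousMap.smul_apply, ContinuousMap.one_apply,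
        reindexStarAlgEquiv_apply, h0, map_smul, coe_reindexStarAlgEquiv, reindex_diagProj σ hσ]
      module
    · rw [ContinuousMap.sub_apply, ContinuousMap.smul_apply, ContinuousMap.one_apply,
        reindexStarAlgEquiv_apply, h1, map_smul, map_one, sub_smul]
  have := add_mem (StarAlgebra.subset_adjoin ℂ _ hg) ((StarAlgebra.adjoin ℂ _).algebraMap_mem μ)
  rwa [Algebra.algebraMap_eq_smul_one, sub_add_cancel] at this

theorem exists_perm_symm_lt_iff (hpq : p < q) :
    ∃ σ : Equiv.Perm (Fin q), ∀ i, (σ.symm i : ℕ) < p ↔ q - p ≤ i := by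
  have : NeZero q := ⟨by omega⟩
  refine ⟨(Equiv.addRight (⟨p, hpq⟩ : Fin q)).symm, fun i => ?_⟩
  rw [Equiv.symm_symm, Equiv.coe_addRight, Fin.val_add]
  have hi := i.isLt
  rcases lt_or_ge (i + p) q with h | h
  · rw [Nat.mod_eq_of_lt h]
    omega
  · rw [Nat.mod_eq_sub_mod h, Nat.mod_eq_of_lt (by omega)]
    omega

end Apq

/-- The minimal unitization of `A_{p,q}` is ∗-isomorphic to the minimal unitization of
`A_{q−p,q}`. -/
theorem unitization_Apq_iso (p q : ℕ) (hp : 0 < p) (hpq : p < q) :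
    Nonempty
      (Unitization ℂ (Apq p q) ≃⋆ₐ[ℂ] Unitization ℂ (Apq (q - p) q)) := by
  obtain ⟨σ, hσ⟩ := exists_perm_symm_lt_iff hpq
  have hσ' : ∀ i, (σ.symm.symm i : ℕ) < q - p ↔ p ≤ i := fun i => by
    simpa only [Equiv.symm_symm, Equiv.symm_apply_apply, not_lt, not_le, Iff.comm]
      using (hσ (σ i)).not
  let e := ContinuousMap.reindexStarAlgEquiv unitInterval ℂ ℂ σ
  exact ⟨(NonUnitalStarSubalgebra.unitizationStarAlgEquiv _ (one_notMem_Apq hpq)).trans <|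
    (e.adjoinCongr (fun f hf => reindex_mem_adjoin_Apq σ hσ hf)
      (fun g hg => reindex_mem_adjoin_Apq σ.symm hσ' hg)).trans
    (NonUnitalStarSubalgebra.unitizationStarAlgEquiv _ (one_notMem_Apq (by omega))).symm⟩
end
end

section
/- Let B be a C*-algebra of stable rank 1, let s be a positive element of B, let n ≥ 1, and let p be a projection in M_n(B) that is Cuntz subequivalent in M_n(B) to the block-diagonal element diag(s, 0, …, 0). Then there exists x ∈ M_n(B) with x*x = p and xx* = diag(q, 0, …, 0) for some projection q ∈ B; in particular, p is Murray–von Neumann equivalent in M_n(B) to a projection living in the (1,1) corner B. -/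
open Filter Topology Matrix

/-- `a` is Cuntz subequivalent to `b`: there is a sequence `dₖ` with `dₖ b dₖ* → a`. -/
def CuntzSubequivalent {D : Type*} [NonUnitalRing D] [TopologicalSpace D] [Star D]
    (a b : D) : Prop :=
  ∃ d : ℕ → D, Tendsto (fun k => d k * b * star (d k)) atTop (𝓝 a)

/-- A C*-algebra has stable rank one if the invertible elements of its minimal
unitization are dense. -/
def StableRankOne (B : Type*) [NonUnitalCStarAlgebra B] : Prop :=
  Dense {x : Unitization ℂ B | IsUnit x}

/-!
Write `b = r* r`. Since `dₖ b dₖ* → p`, also `p dₖ b dₖ* p → p³ = p`, so for some `k` the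
element `w = r dₖ*` satisfies `‖p - p w* w p‖ < 1`. Then `p w* w p = p (1 - e)` with
`e = p - p w* w p` commuting with `p`, and `1 - e` is strictly positive in the unitization; for
`v = (1 - e)^(-1/2)` the element `x = w p v` satisfies `x* x = v p (1 - e) v = p`, and
`x x* = r (dₖ* p v² p dₖ) r*` lies in the hereditary subalgebra `r A r*`. For `A = Mₙ(B)`
(a C⋆-algebra via `CStarMatrix`) and `r = diag(√s, 0, …, 0)` that is the `(1,1)` corner, and
`x x*` is a projection because `x` is a partial isometry.
-/

section Unital

variable {A : Type*} [CStarAlgebra A] [PartialOrder A] [StarOrderedRing A]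

lemma IsSelfAdjoint.isStrictlyPositive_one_sub {e : A} (he : IsSelfAdjoint e) (h : ‖e‖ < 1) :
    IsStrictlyPositive (1 - e) := by
  refine IsStrictlyPositive.iff_of_unital.2 ⟨sub_nonneg.2 ?_, (Units.oneSub e h).isUnit⟩
  calc e ≤ algebraMap ℝ A ‖e‖ := he.le_algebraMap_norm_self
    _ ≤ algebraMap ℝ A 1 := algebraMap_mono A h.le
    _ = 1 := map_one _

lemma IsStarProjection.exists_star_mul_self_eq_of_norm_sub_lt_one_unital {p w : A}
    (hp : IsStarProjection p) (h : ‖p - p * (star w * w) * p‖ < 1) :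
    ∃ v : A, star (w * p * v) * (w * p * v) = p := by
  set c := star w * w
  set e := p - p * c * p with he
  have hpe : p * e = p - p * c * p := by
    rw [he, mul_sub, hp.isIdempotentElem.eq, ← mul_assoc, ← mul_assoc, hp.isIdempotentElem.eq]
  have hep : e * p = p - p * c * p := by
    rw [he, sub_mul, hp.isIdempotentElem.eq, mul_assoc _ p p, hp.isIdempotentElem.eq]
  have he_sa : IsSelfAdjoint e := by
    have hpcp := (IsSelfAdjoint.star_mul_self w).conjugate' p
    rw [hp.isSelfAdjoint.star_eq] at hpcp
    exact hp.isSelfAdjoint.sub hpcp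
  set a := 1 - e
  have ha : IsStrictlyPositive a := he_sa.isStrictlyPositive_one_sub h
  have hpa : p * a = p * c * p := by rw [mul_sub, mul_one, hpe, sub_sub_cancel]
  have hap : Commute a p := by
    rw [commute_iff_eq, sub_mul, mul_sub, one_mul, mul_one, hpe, hep]
  set v := a ^ (-(1 / 2) : ℝ)
  have hvav : v * a * v = 1 := by
    conv_lhs => rw [← CFC.rpow_one a ha.nonneg, ← CFC.rpow_add ha.isUnit]
    rw [show -(1 / 2 : ℝ) + 1 = 1 / 2 by norm_num]
    exact CFC.rpow_mul_rpow_neg _ ha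
  have hvp : Commute v p := hap.cfc_nnreal _
  have hv_sa : IsSelfAdjoint v := CFC.rpow_nonneg.isSelfAdjoint
  refine ⟨v, ?_⟩
  calc star (w * p * v) * (w * p * v) = v * (p * c * p) * v := by
        simp only [star_mul, hp.isSelfAdjoint.star_eq, hv_sa.star_eq, c, mul_assoc]
    _ = p * (v * a * v) := by rw [← hpa, ← mul_assoc v p a, hvp.eq]; simp only [mul_assoc]
    _ = p := by rw [hvav, mul_one]

end Unital

lemma Unitization.inr_mul_eq_inr {R A : Type*} [CommSemiring R] [NonUnitalSemiring A] [Module R A]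
    (a : A) (u : Unitization R A) : (a : Unitization R A) * u = ↑(u.fst • a + a * u.snd) := by
  conv_lhs => rw [← u.inl_fst_add_inr_snd_eq]
  rw [mul_add, inr_mul_inl, ← inr_mul, inr_add]

section NonUnital

variable {A : Type*} [NonUnitalCStarAlgebra A]

lemma IsStarProjection.exists_star_mul_self_eq_of_norm_sub_lt_one {p w : A}
    (hp : IsStarProjection p) (h : ‖p - p * (star w * w) * p‖ < 1) :
    ∃ t : A, star (w * t) * (w * t) = p := by
  have hp' : IsStarProjection (p : Unitization ℂ A) := Unitization.isStarProjection_inr_iff.2 hp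
  have h' : ‖(p : Unitization ℂ A) - p * (star (w : Unitization ℂ A) * w) * p‖ < 1 := by
    rwa [← Unitization.inr_star, ← Unitization.inr_mul, ← Unitization.inr_mul,
      ← Unitization.inr_mul, ← Unitization.inr_sub, Unitization.norm_inr]
  obtain ⟨v, hv⟩ := hp'.exists_star_mul_self_eq_of_norm_sub_lt_one_unital h'
  have hwt : ((w * (v.fst • p + p * v.snd) : A) : Unitization ℂ A) = w * p * v := by
    rw [Unitization.inr_mul, ← Unitization.inr_mul_eq_inr, mul_assoc]
  refine ⟨v.fst • p + p * v.snd, Unitization.inr_injective (R := ℂ) ?_⟩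
  rwa [Unitization.inr_mul, Unitization.inr_star, hwt]

lemma IsStarProjection.mul_star_self {x : A} (h : IsStarProjection (star x * x)) :
    IsStarProjection (x * star x) := by
  set P := star x * x with hP
  have hxP : x * P = x := by
    have hstar : star (x - x * P) = star x - P * star x := by
      rw [star_sub, star_mul, h.isSelfAdjoint.star_eq]
    refine (sub_eq_zero.1 ((CStarRing.star_mul_self_eq_zero_iff _).1 ?_)).symm
    calc star (x - x * P) * (x - x * P) = P - P * P - (P * P - P * P * P) := by
          rw [hstar, hP]; noncomm_ring
      _ = 0 := by simp only [h.isIdempotentElem.eq, sub_self]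
  refine ⟨?_, .mul_star_self x⟩
  rw [IsIdempotentElem, ← mul_assoc, mul_assoc x (star x) x, hxP]

theorem CuntzSubequivalent.exists_star_mul_self_eq {p r : A}
    (h : CuntzSubequivalent p (star r * r)) (hp : IsStarProjection p) :
    ∃ x y : A, star x * x = p ∧ x * star x = r * y * star r := by
  obtain ⟨d, hd⟩ := h
  have hlim : Tendsto (fun k => p - p * (d k * (star r * r) * star (d k)) * p) atTop (𝓝 0) := by
    have hcont : Continuous fun c : A => p - p * c * p := by fun_prop
    have := (hcont.tendsto p).comp hd
    rwa [hp.isIdempotentElem.eq, hp.isIdempotentElem.eq, sub_self] at this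
  obtain ⟨k, hk⟩ :=
    ((tendsto_zero_iff_norm_tendsto_zero.1 hlim).eventually_lt_const one_pos).exists
  obtain ⟨t, ht⟩ := hp.exists_star_mul_self_eq_of_norm_sub_lt_one (w := r * star (d k)) (by
    simpa only [star_mul, star_star, mul_assoc] using hk)
  refine ⟨r * (star (d k) * t), star (d k) * t * star t * d k,
    by simpa only [mul_assoc] using ht, ?_⟩
  simp only [star_mul, star_star, mul_assoc]

end NonUnital

lemma Matrix.single_inj {m n R : Type*} [DecidableEq m] [DecidableEq n] [Zero R] (i : m) (j : n)
    {a b : R} : single i j a = single i j b ↔ a = b :=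
  ⟨fun h => by simpa using congrFun (congrFun h i) j, congrArg _⟩

lemma Matrix.isStarProjection_single_iff {n R : Type*} [Fintype n] [DecidableEq n]
    [NonUnitalSemiring R] [StarRing R] (i : n) (q : R) :
    IsStarProjection (single i i q) ↔ IsStarProjection q := by
  simp only [isStarProjection_iff, IsIdempotentElem, IsSelfAdjoint, star_eq_conjTranspose,
    conjTranspose_single, single_mul_single_same, single_inj]

theorem projection_mvN_equivalent_corner_general
    {B : Type*} [NonUnitalCStarAlgebra B] [PartialOrder B] [StarOrderedRing B]
    (s : B) (hs : 0 ≤ s)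
    {n : ℕ} (hn : 0 < n) (p : Matrix (Fin n) (Fin n) B)
    (hp : IsSelfAdjoint p ∧ IsIdempotentElem p)
    (h : CuntzSubequivalent p (Matrix.single ⟨0, hn⟩ ⟨0, hn⟩ s)) :
    ∃ (x : Matrix (Fin n) (Fin n) B) (q : B),
      IsSelfAdjoint q ∧ IsIdempotentElem q ∧
      star x * x = p ∧ x * star x = Matrix.single ⟨0, hn⟩ ⟨0, hn⟩ q := by
  set i : Fin n := ⟨0, hn⟩
  set r : Matrix (Fin n) (Fin n) B := single i i (CFC.sqrt s)
  have hr : star r * r = single i i s := by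
    rw [star_eq_conjTranspose, conjTranspose_single, single_mul_single_same,
      (CFC.sqrt_nonneg s).isSelfAdjoint.star_eq, CFC.sqrt_mul_sqrt_self s hs]
  obtain ⟨x, y, hxx, hxy⟩ : ∃ x y : Matrix (Fin n) (Fin n) B,
      star x * x = p ∧ x * star x = r * y * star r :=
    CuntzSubequivalent.exists_star_mul_self_eq (A := CStarMatrix (Fin n) (Fin n) B) (hr ▸ h)
      ⟨hp.2, hp.1⟩
  have hcorner : x * star x = single i i (CFC.sqrt s * y i i * star (CFC.sqrt s)) := by
    rw [hxy, star_eq_conjTranspose, conjTranspose_single, single_mul_mul_single]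
  have hxx' : IsStarProjection (x * star x) :=
    IsStarProjection.mul_star_self (A := CStarMatrix (Fin n) (Fin n) B) (hxx ▸ ⟨hp.2, hp.1⟩)
  have hq := (isStarProjection_single_iff _ _).1 (hcorner ▸ hxx')
  exact ⟨x, _, hq.isSelfAdjoint, hq.isIdempotentElem, hxx, hcorner⟩

/-- If `B` has stable rank one, `s ∈ B` is positive, and `p` is a projection in
`Mₙ(B)` Cuntz subequivalent to `diag(s, 0, …, 0)`, then `p` is Murray–von Neumann
equivalent to a projection `q` sitting in the `(1,1)` corner of `Mₙ(B)`. -/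
theorem projection_mvN_equivalent_corner
    {B : Type*} [NonUnitalCStarAlgebra B] [PartialOrder B] [StarOrderedRing B]
    (hB : StableRankOne B) (s : B) (hs : 0 ≤ s)
    {n : ℕ} (hn : 0 < n) (p : Matrix (Fin n) (Fin n) B)
    (hp : IsSelfAdjoint p ∧ IsIdempotentElem p)
    (h : CuntzSubequivalent p (Matrix.single ⟨0, hn⟩ ⟨0, hn⟩ s)) :
    ∃ (x : Matrix (Fin n) (Fin n) B) (q : B),
      IsSelfAdjoint q ∧ IsIdempotentElem q ∧
      star x * x = p ∧ x * star x = Matrix.single ⟨0, hn⟩ ⟨0, hn⟩ q :=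
  projection_mvN_equivalent_corner_general s hs hn p hp h
end

section
/- Let A and B be separable unital C*-algebras, and let φ : A → B and ψ : B → A be unital *-homomorphisms such that ψ ∘ φ is approximately unitarily equivalent to the identity map of A and φ ∘ ψ is approximately unitarily equivalent to the identity map of B. Then A and B are *-isomorphic. (Elliott's approximate intertwining argument.) -/
open Filter Topology

namespace ElliottAux

private lemma natRecChoice {X : Type*} (init : X) {R : ℕ → X → X → Prop}
    (h : ∀ n p, ∃ q, R n p q) :
    ∃ g : ℕ → X, g 0 = init ∧ ∀ n, R n (g n) (g (n + 1)) := by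
  choose f hf using h
  exact ⟨fun n => Nat.rec init (fun n p => f n p) n, rfl, fun n => hf n _⟩

variable {M : Type*} [CStarAlgebra M]

private def ad (u x : M) : M := star u * x * u

private lemma ad_add (u x y : M) : ad u (x + y) = ad u x + ad u y := by
  simp [ad, mul_add, add_mul]

private lemma ad_sub (u x y : M) : ad u (x - y) = ad u x - ad u y := by
  simp [ad, mul_sub, sub_mul]

private lemma ad_smul (u : M) (c : ℂ) (x : M) : ad u (c • x) = c • ad u x := by
  simp [ad, mul_smul_comm, smul_mul_assoc]

private lemma ad_star (u x : M) : ad u (star x) = star (ad u x) := by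
  simp [ad, star_mul, star_star, mul_assoc]

private lemma ad_one {u : M} (hu : u ∈ unitary M) : ad u 1 = 1 := by
  simp [ad, Unitary.star_mul_self_of_mem hu]

private lemma ad_zero (u : M) : ad u 0 = 0 := by simp [ad]

private lemma ad_mul {u : M} (hu : u ∈ unitary M) (x y : M) :
    ad u (x * y) = ad u x * ad u y := by
  have h1 : ∀ z : M, u * (star u * z) = z := fun z => by
    rw [← mul_assoc, Unitary.mul_star_self_of_mem hu, one_mul]
  simp only [ad, mul_assoc, h1]

private lemma ad_ad {z : M} (hz : z ∈ unitary M) (w x : M) :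
    ad (star z * w) (ad z x) = ad w x := by
  have h1 : ∀ y : M, z * (star z * y) = y := fun y => by
    rw [← mul_assoc, Unitary.mul_star_self_of_mem hz, one_mul]
  simp only [ad, star_mul, star_star, mul_assoc, h1]

private lemma ad_algebraMap {u : M} (hu : u ∈ unitary M) (c : ℂ) :
    ad u (algebraMap ℂ M c) = algebraMap ℂ M c := by
  rw [Algebra.algebraMap_eq_smul_one, ad_smul, ad_one hu]

private lemma norm_ad {u : M} (hu : u ∈ unitary M) (x : M) : ‖ad u x‖ = ‖x‖ := by
  rw [ad, CStarRing.norm_mul_mem_unitary _ hu,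
    CStarRing.norm_mem_unitary_mul x (Unitary.star_mem hu)]

private lemma map_mem_unitary' {M N : Type*} [CStarAlgebra M] [CStarAlgebra N]
    (f : M →⋆ₐ[ℂ] N) {u : M} (hu : u ∈ unitary M) : f u ∈ unitary N := by
  rw [Unitary.mem_iff] at hu ⊢
  refine ⟨?_, ?_⟩
  · rw [← map_star, ← map_mul, hu.1, map_one]
  · rw [← map_star, ← map_mul, hu.2, map_one]

private lemma exists_tendsto_of_step {E : Type*} [NormedAddCommGroup E] [CompleteSpace E]
    (f : ℕ → E) (N : ℕ) (h : ∀ n, N ≤ n → ‖f (n + 1) - f n‖ ≤ 2 * (2:ℝ)⁻¹ ^ n) :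
    ∃ L, Tendsto f atTop (𝓝 L) := by
  have hc : CauchySeq (fun n => f (n + N)) := by
    apply cauchySeq_of_le_geometric (2:ℝ)⁻¹ (2 * (2:ℝ)⁻¹ ^ N) (by norm_num)
    intro n
    have e : n + 1 + N = (n + N) + 1 := by omega
    rw [dist_eq_norm, norm_sub_rev, e]
    calc ‖f ((n + N) + 1) - f (n + N)‖ ≤ 2 * (2:ℝ)⁻¹ ^ (n + N) := h _ (by omega)
      _ = 2 * (2:ℝ)⁻¹ ^ N * (2:ℝ)⁻¹ ^ n := by rw [pow_add]; ring
  obtain ⟨L, hL⟩ := cauchySeq_tendsto_of_complete hc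
  exact ⟨L, (tendsto_add_atTop_iff_nat N).mp hL⟩

end ElliottAux

open ElliottAux

/-- Two maps of a unital C*-algebra `A` into itself are approximately unitarily
equivalent if on every finite set they can be conjugated to within `ε` of each other
by a unitary of `A`. -/
def ApproxUnitarilyEquiv {A : Type*} [CStarAlgebra A] (σ τ : A → A) : Prop :=
  ∀ (F : Finset A) (ε : ℝ), 0 < ε →
    ∃ u ∈ unitary A, ∀ x ∈ F, ‖star u * σ x * u - τ x‖ < ε

/-- Elliott's approximate intertwining argument: if `φ : A → B` and `ψ : B → A` are
unital ∗-homomorphisms between separable unital C*-algebras such that `ψ ∘ φ` and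
`φ ∘ ψ` are approximately inner, then `A ≅ B`. -/
theorem starAlgEquiv_of_approx_intertwining
    {A B : Type*} [CStarAlgebra A] [CStarAlgebra B]
    [TopologicalSpace.SeparableSpace A] [TopologicalSpace.SeparableSpace B]
    (φ : A →⋆ₐ[ℂ] B) (ψ : B →⋆ₐ[ℂ] A)
    (h1 : ApproxUnitarilyEquiv (fun a => ψ (φ a)) id)
    (h2 : ApproxUnitarilyEquiv (fun b => φ (ψ b)) id) :
    Nonempty (A ≃⋆ₐ[ℂ] B) := by
  classical
  haveI : Nonempty A := ⟨1⟩
  haveI : Nonempty B := ⟨1⟩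
  obtain ⟨da, haA⟩ : ∃ f : ℕ → A, DenseRange f :=
    ⟨TopologicalSpace.denseSeq A, TopologicalSpace.denseRange_denseSeq A⟩
  obtain ⟨db, hbB⟩ : ∃ f : ℕ → B, DenseRange f :=
    ⟨TopologicalSpace.denseSeq B, TopologicalSpace.denseRange_denseSeq B⟩
  -- the recursive construction of unitaries
  have step : ∀ (n : ℕ) (p : ↥(unitary B) × ↥(unitary A)),
      ∃ q : ↥(unitary B) × ↥(unitary A),
      (∀ i < n, ‖ad (q.1 : B) (φ (ad (p.2 : A) (ψ (db i)))) - db i‖ < (2:ℝ)⁻¹ ^ n) ∧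
      (∀ i < n, ‖ad (q.1 : B) (φ (ad (p.2 : A) (ψ (ad (p.1 : B) (φ (da i)))))) -
        ad (p.1 : B) (φ (da i))‖ < (2:ℝ)⁻¹ ^ n) ∧
      (∀ i ≤ n, ‖ad (q.2 : A) (ψ (ad (q.1 : B) (φ (da i)))) - da i‖ < (2:ℝ)⁻¹ ^ (n + 1)) ∧
      (∀ i ≤ n, ‖ad (q.2 : A) (ψ (ad (q.1 : B) (φ (ad (p.2 : A) (ψ (db i)))))) -
        ad (p.2 : A) (ψ (db i))‖ < (2:ℝ)⁻¹ ^ (n + 1)) := by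
    intro n p
    obtain ⟨w, hw, hwG⟩ := h2 ((Finset.range n).image db ∪
      (Finset.range n).image (fun i => ad (p.1 : B) (φ (da i)))) ((2:ℝ)⁻¹ ^ n) (by positivity)
    have hφp2 : φ (p.2 : A) ∈ unitary B := map_mem_unitary' φ p.2.2
    have hu' : star (φ (p.2 : A)) * w ∈ unitary B := mul_mem (Unitary.star_mem hφp2) hw
    have key1 : ∀ y : B, ad (star (φ (p.2 : A)) * w) (φ (ad (p.2 : A) (ψ y)))
        = star w * φ (ψ y) * w := by
      intro y
      have e1 : φ (ad (p.2 : A) (ψ y)) = ad (φ (p.2 : A)) (φ (ψ y)) := by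
        simp [ElliottAux.ad, map_mul, map_star]
      rw [e1, ad_ad hφp2]
      rfl
    obtain ⟨w', hw', hwF⟩ := h1 ((Finset.range (n + 1)).image da ∪
      (Finset.range (n + 1)).image (fun i => ad (p.2 : A) (ψ (db i)))) ((2:ℝ)⁻¹ ^ (n + 1))
      (by positivity)
    have hψu' : ψ (star (φ (p.2 : A)) * w) ∈ unitary A := map_mem_unitary' ψ hu'
    have hv' : star (ψ (star (φ (p.2 : A)) * w)) * w' ∈ unitary A :=
      mul_mem (Unitary.star_mem hψu') hw'
    have key2 : ∀ x : A, ad (star (ψ (star (φ (p.2 : A)) * w)) * w')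
        (ψ (ad (star (φ (p.2 : A)) * w) (φ x))) = star w' * ψ (φ x) * w' := by
      intro x
      have e1 : ψ (ad (star (φ (p.2 : A)) * w) (φ x))
          = ad (ψ (star (φ (p.2 : A)) * w)) (ψ (φ x)) := by
        simp [ElliottAux.ad, map_mul, map_star]
      rw [e1, ad_ad hψu']
      rfl
    refine ⟨(⟨_, hu'⟩, ⟨_, hv'⟩), ?_, ?_, ?_, ?_⟩
    · intro i hi
      show ‖ad (star (φ (p.2 : A)) * w) (φ (ad (p.2 : A) (ψ (db i)))) - db i‖ < (2:ℝ)⁻¹ ^ n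
      rw [key1]
      simpa using hwG (db i)
        (Finset.mem_union_left _ (Finset.mem_image_of_mem db (Finset.mem_range.mpr hi)))
    · intro i hi
      show ‖ad (star (φ (p.2 : A)) * w) (φ (ad (p.2 : A) (ψ (ad (p.1 : B) (φ (da i)))))) -
        ad (p.1 : B) (φ (da i))‖ < (2:ℝ)⁻¹ ^ n
      rw [key1]
      simpa using hwG (ad (p.1 : B) (φ (da i)))
        (Finset.mem_union_right _ (Finset.mem_image_of_mem _ (Finset.mem_range.mpr hi)))
    · intro i hi
      show ‖ad (star (ψ (star (φ (p.2 : A)) * w)) * w')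
        (ψ (ad (star (φ (p.2 : A)) * w) (φ (da i)))) - da i‖ < (2:ℝ)⁻¹ ^ (n + 1)
      rw [key2]
      simpa using hwF (da i)
        (Finset.mem_union_left _ (Finset.mem_image_of_mem da (Finset.mem_range.mpr (by omega))))
    · intro i hi
      show ‖ad (star (ψ (star (φ (p.2 : A)) * w)) * w')
        (ψ (ad (star (φ (p.2 : A)) * w) (φ (ad (p.2 : A) (ψ (db i)))))) -
        ad (p.2 : A) (ψ (db i))‖ < (2:ℝ)⁻¹ ^ (n + 1)
      rw [key2]
      simpa using hwF (ad (p.2 : A) (ψ (db i)))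
        (Finset.mem_union_right _ (Finset.mem_image_of_mem _ (Finset.mem_range.mpr (by omega))))
  obtain ⟨g, -, hg⟩ := natRecChoice (1, 1) step
  set U : ℕ → B := fun n => ((g n).1 : B) with hU
  set V : ℕ → A := fun n => ((g n).2 : A) with hV
  have hUm : ∀ n, U n ∈ unitary B := fun n => (g n).1.2
  have hVm : ∀ n, V n ∈ unitary A := fun n => (g n).2.2
  set φn : ℕ → A → B := fun n x => ad (U n) (φ x) with hφn
  set ψn : ℕ → B → A := fun n y => ad (V n) (ψ y) with hψn
  have hBstep : ∀ n i, i < n → ‖φn (n + 1) (ψn n (db i)) - db i‖ < (2:ℝ)⁻¹ ^ n :=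
    fun n i hi => (hg n).1 i hi
  have hB2step : ∀ n i, i < n →
      ‖φn (n + 1) (ψn n (φn n (da i))) - φn n (da i)‖ < (2:ℝ)⁻¹ ^ n :=
    fun n i hi => (hg n).2.1 i hi
  have hAstep : ∀ n i, i < n → ‖ψn n (φn n (da i)) - da i‖ < (2:ℝ)⁻¹ ^ n := by
    intro n i hi
    cases n with
    | zero => omega
    | succ m => exact (hg m).2.2.1 i (by omega)
  have hA2step : ∀ n i, i ≤ n →
      ‖ψn (n + 1) (φn (n + 1) (ψn n (db i))) - ψn n (db i)‖ < (2:ℝ)⁻¹ ^ (n + 1) :=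
    fun n i hi => (hg n).2.2.2 i hi
  -- Lipschitz bounds
  have hφLip : ∀ n (x y : A), ‖φn n x - φn n y‖ ≤ ‖x - y‖ := by
    intro n x y
    have e : φn n x - φn n y = ad (U n) (φ (x - y)) := by
      show ad (U n) (φ x) - ad (U n) (φ y) = ad (U n) (φ (x - y))
      rw [map_sub, ad_sub]
    rw [e, norm_ad (hUm n)]
    exact NonUnitalStarAlgHom.norm_apply_le φ _
  have hψLip : ∀ n (x y : B), ‖ψn n x - ψn n y‖ ≤ ‖x - y‖ := by
    intro n x y
    have e : ψn n x - ψn n y = ad (V n) (ψ (x - y)) := by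
      show ad (V n) (ψ x) - ad (V n) (ψ y) = ad (V n) (ψ (x - y))
      rw [map_sub, ad_sub]
    rw [e, norm_ad (hVm n)]
    exact NonUnitalStarAlgHom.norm_apply_le ψ _
  have hhalf : ∀ n : ℕ, ((2:ℝ)⁻¹) ^ (n + 1) ≤ (2:ℝ)⁻¹ ^ n := by
    intro n
    rw [pow_succ]
    nlinarith [pow_nonneg (by norm_num : (0:ℝ) ≤ 2⁻¹) n]
  -- increment bounds
  have tri : ∀ {E : Type} (x y z : E), True := fun _ _ _ => trivial
  have hφinc : ∀ n i, i < n → ‖φn (n + 1) (da i) - φn n (da i)‖ ≤ 2 * (2:ℝ)⁻¹ ^ n := by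
    intro n i hi
    have h1 : ‖φn (n + 1) (da i) - φn n (da i)‖ ≤
        ‖φn (n + 1) (da i) - φn (n + 1) (ψn n (φn n (da i)))‖ +
        ‖φn (n + 1) (ψn n (φn n (da i))) - φn n (da i)‖ := by
      simpa [dist_eq_norm] using
        dist_triangle (φn (n + 1) (da i)) (φn (n + 1) (ψn n (φn n (da i)))) (φn n (da i))
    have h2 : ‖φn (n + 1) (da i) - φn (n + 1) (ψn n (φn n (da i)))‖ ≤
        ‖da i - ψn n (φn n (da i))‖ := hφLip _ _ _
    have h3 : ‖da i - ψn n (φn n (da i))‖ < (2:ℝ)⁻¹ ^ n := by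
      rw [norm_sub_rev]; exact hAstep n i hi
    have h4 := hB2step n i hi
    linarith
  have hψinc : ∀ n i, i < n → ‖ψn (n + 1) (db i) - ψn n (db i)‖ ≤ 2 * (2:ℝ)⁻¹ ^ n := by
    intro n i hi
    have h1 : ‖ψn (n + 1) (db i) - ψn n (db i)‖ ≤
        ‖ψn (n + 1) (db i) - ψn (n + 1) (φn (n + 1) (ψn n (db i)))‖ +
        ‖ψn (n + 1) (φn (n + 1) (ψn n (db i))) - ψn n (db i)‖ := by
      simpa [dist_eq_norm] using
        dist_triangle (ψn (n + 1) (db i)) (ψn (n + 1) (φn (n + 1) (ψn n (db i)))) (ψn n (db i))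
    have h2 : ‖ψn (n + 1) (db i) - ψn (n + 1) (φn (n + 1) (ψn n (db i)))‖ ≤
        ‖db i - φn (n + 1) (ψn n (db i))‖ := hψLip _ _ _
    have h3 : ‖db i - φn (n + 1) (ψn n (db i))‖ < (2:ℝ)⁻¹ ^ n := by
      rw [norm_sub_rev]; exact hBstep n i hi
    have h4 := hA2step n i (le_of_lt hi)
    have h5 := hhalf n
    linarith
  -- existence of pointwise limits
  have hφex : ∀ x : A, ∃ L, Tendsto (fun n => φn n x) atTop (𝓝 L) := by
    intro x
    refine cauchySeq_tendsto_of_complete ?_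
    rw [Metric.cauchySeq_iff]
    intro ε hε
    obtain ⟨i, hi⟩ := haA.exists_dist_lt x (show (0:ℝ) < ε / 4 by linarith)
    obtain ⟨L, hL⟩ := exists_tendsto_of_step (fun n => φn n (da i)) (i + 1)
      (fun n hn => hφinc n i (by omega))
    have hc := hL.cauchySeq
    rw [Metric.cauchySeq_iff] at hc
    obtain ⟨N, hN⟩ := hc (ε / 4) (by linarith)
    refine ⟨N, fun m hm n hn => ?_⟩
    have t4 := dist_triangle4 (φn m x) (φn m (da i)) (φn n (da i)) (φn n x)
    have d1 : dist (φn m x) (φn m (da i)) ≤ dist x (da i) := by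
      rw [dist_eq_norm, dist_eq_norm]; exact hφLip m x (da i)
    have d3 : dist (φn n (da i)) (φn n x) ≤ dist x (da i) := by
      rw [dist_eq_norm, dist_comm x (da i), dist_eq_norm]; exact hφLip n (da i) x
    have d2 := hN m hm n hn
    linarith
  have hψex : ∀ y : B, ∃ L, Tendsto (fun n => ψn n y) atTop (𝓝 L) := by
    intro y
    refine cauchySeq_tendsto_of_complete ?_
    rw [Metric.cauchySeq_iff]
    intro ε hε
    obtain ⟨i, hi⟩ := hbB.exists_dist_lt y (show (0:ℝ) < ε / 4 by linarith)
    obtain ⟨L, hL⟩ := exists_tendsto_of_step (fun n => ψn n (db i)) (i + 1)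
      (fun n hn => hψinc n i (by omega))
    have hc := hL.cauchySeq
    rw [Metric.cauchySeq_iff] at hc
    obtain ⟨N, hN⟩ := hc (ε / 4) (by linarith)
    refine ⟨N, fun m hm n hn => ?_⟩
    have t4 := dist_triangle4 (ψn m y) (ψn m (db i)) (ψn n (db i)) (ψn n y)
    have d1 : dist (ψn m y) (ψn m (db i)) ≤ dist y (db i) := by
      rw [dist_eq_norm, dist_eq_norm]; exact hψLip m y (db i)
    have d3 : dist (ψn n (db i)) (ψn n y) ≤ dist y (db i) := by
      rw [dist_eq_norm, dist_comm y (db i), dist_eq_norm]; exact hψLip n (db i) y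
    have d2 := hN m hm n hn
    linarith
  choose Φ hΦ using hφex
  choose Ψ hΨ using hψex
  -- algebraic properties of Φ
  have hΦadd : ∀ x y, Φ (x + y) = Φ x + Φ y := by
    intro x y
    refine tendsto_nhds_unique (hΦ (x + y)) ?_
    have e : (fun n => φn n (x + y)) = fun n => φn n x + φn n y := by
      funext n
      show ad (U n) (φ (x + y)) = ad (U n) (φ x) + ad (U n) (φ y)
      rw [map_add, ad_add]
    rw [e]
    exact (hΦ x).add (hΦ y)
  have hΦmul : ∀ x y, Φ (x * y) = Φ x * Φ y := by
    intro x y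
    refine tendsto_nhds_unique (hΦ (x * y)) ?_
    have e : (fun n => φn n (x * y)) = fun n => φn n x * φn n y := by
      funext n
      show ad (U n) (φ (x * y)) = ad (U n) (φ x) * ad (U n) (φ y)
      rw [map_mul, ad_mul (hUm n)]
    rw [e]
    exact (hΦ x).mul (hΦ y)
  have hΦstar : ∀ x, Φ (star x) = star (Φ x) := by
    intro x
    refine tendsto_nhds_unique (hΦ (star x)) ?_
    have e : (fun n => φn n (star x)) = fun n => star (φn n x) := by
      funext n
      show ad (U n) (φ (star x)) = star (ad (U n) (φ x))
      rw [map_star, ad_star]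
    rw [e]
    exact (hΦ x).star
  have hΦone : Φ 1 = 1 := by
    refine tendsto_nhds_unique (hΦ 1) ?_
    have e : (fun n => φn n 1) = fun _ => (1 : B) := by
      funext n
      show ad (U n) (φ 1) = 1
      rw [map_one, ad_one (hUm n)]
    rw [e]
    exact tendsto_const_nhds
  have hΦzero : Φ 0 = 0 := by
    refine tendsto_nhds_unique (hΦ 0) ?_
    have e : (fun n => φn n 0) = fun _ => (0 : B) := by
      funext n
      show ad (U n) (φ 0) = 0
      rw [map_zero, ad_zero]
    rw [e]
    exact tendsto_const_nhds
  have hΦalg : ∀ c : ℂ, Φ (algebraMap ℂ A c) = algebraMap ℂ B c := by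
    intro c
    refine tendsto_nhds_unique (hΦ _) ?_
    have e : (fun n => φn n (algebraMap ℂ A c)) = fun _ => algebraMap ℂ B c := by
      funext n
      show ad (U n) (φ (algebraMap ℂ A c)) = algebraMap ℂ B c
      rw [AlgHomClass.commutes φ c, ad_algebraMap (hUm n)]
    rw [e]
    exact tendsto_const_nhds
  -- continuity
  have hΦLip : ∀ x y, ‖Φ x - Φ y‖ ≤ ‖x - y‖ := by
    intro x y
    refine le_of_tendsto (((hΦ x).sub (hΦ y)).norm) ?_
    exact Eventually.of_forall fun n => hφLip n x y
  have hΨLip : ∀ x y, ‖Ψ x - Ψ y‖ ≤ ‖x - y‖ := by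
    intro x y
    refine le_of_tendsto (((hΨ x).sub (hΨ y)).norm) ?_
    exact Eventually.of_forall fun n => hψLip n x y
  have hΦcont : Continuous Φ := by
    refine (LipschitzWith.of_dist_le_mul (K := 1) fun x y => ?_).continuous
    rw [dist_eq_norm, dist_eq_norm, NNReal.coe_one, one_mul]
    exact hΦLip x y
  have hΨcont : Continuous Ψ := by
    refine (LipschitzWith.of_dist_le_mul (K := 1) fun x y => ?_).continuous
    rw [dist_eq_norm, dist_eq_norm, NNReal.coe_one, one_mul]
    exact hΨLip x y
  have hpow0 : Tendsto (fun n : ℕ => ((2:ℝ)⁻¹) ^ n) atTop (𝓝 0) :=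
    tendsto_pow_atTop_nhds_zero_of_lt_one (by norm_num) (by norm_num)
  -- left inverse
  have hleft : ∀ x, Ψ (Φ x) = x := by
    have key : ∀ i, Ψ (Φ (da i)) = da i := by
      intro i
      have t1 : Tendsto (fun n => ψn n (φn n (da i))) atTop (𝓝 (da i)) := by
        rw [← tendsto_sub_nhds_zero_iff]
        refine squeeze_zero_norm' ?_ hpow0
        filter_upwards [eventually_gt_atTop i] with n hn
        exact (hAstep n i hn).le
      have t2 : Tendsto (fun n => ψn n (φn n (da i))) atTop (𝓝 (Ψ (Φ (da i)))) := by
        have e : (fun n => ψn n (φn n (da i))) =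
            fun n => ψn n (Φ (da i)) + (ψn n (φn n (da i)) - ψn n (Φ (da i))) := by
          funext n; abel
        rw [e]
        have s2 : Tendsto (fun n => ψn n (φn n (da i)) - ψn n (Φ (da i))) atTop (𝓝 0) := by
          apply squeeze_zero_norm (fun n => hψLip n (φn n (da i)) (Φ (da i)))
          have h0 : Tendsto (fun n => φn n (da i) - Φ (da i)) atTop (𝓝 0) := by
            rw [tendsto_sub_nhds_zero_iff]; exact hΦ _
          simpa using h0.norm
        simpa using (hΨ (Φ (da i))).add s2
      exact tendsto_nhds_unique t2 t1
    have e : (fun x => Ψ (Φ x)) = fun x => x := by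
      refine Continuous.ext_on haA (hΨcont.comp hΦcont) continuous_id ?_
      rintro x ⟨i, rfl⟩
      exact key i
    exact fun x => congrFun e x
  -- right inverse
  have hright : ∀ y, Φ (Ψ y) = y := by
    have key : ∀ i, Φ (Ψ (db i)) = db i := by
      intro i
      have t1 : Tendsto (fun n => φn (n + 1) (ψn n (db i))) atTop (𝓝 (db i)) := by
        rw [← tendsto_sub_nhds_zero_iff]
        refine squeeze_zero_norm' ?_ hpow0
        filter_upwards [eventually_gt_atTop i] with n hn
        exact (hBstep n i hn).le
      have t2 : Tendsto (fun n => φn (n + 1) (ψn n (db i))) atTop (𝓝 (Φ (Ψ (db i)))) := by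
        have e : (fun n => φn (n + 1) (ψn n (db i))) =
            fun n => φn (n + 1) (Ψ (db i)) + (φn (n + 1) (ψn n (db i)) - φn (n + 1) (Ψ (db i))) := by
          funext n; abel
        rw [e]
        have s1 : Tendsto (fun n => φn (n + 1) (Ψ (db i))) atTop (𝓝 (Φ (Ψ (db i)))) :=
          (tendsto_add_atTop_iff_nat 1).mpr (hΦ (Ψ (db i)))
        have s2 : Tendsto (fun n => φn (n + 1) (ψn n (db i)) - φn (n + 1) (Ψ (db i)))
            atTop (𝓝 0) := by
          apply squeeze_zero_norm (fun n => hφLip (n + 1) (ψn n (db i)) (Ψ (db i)))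
          have h0 : Tendsto (fun n => ψn n (db i) - Ψ (db i)) atTop (𝓝 0) := by
            rw [tendsto_sub_nhds_zero_iff]; exact hΨ _
          simpa using h0.norm
        simpa using s1.add s2
      exact tendsto_nhds_unique t2 t1
    have e : (fun y => Φ (Ψ y)) = fun y => y := by
      refine Continuous.ext_on hbB (hΦcont.comp hΨcont) continuous_id ?_
      rintro y ⟨i, rfl⟩
      exact key i
    exact fun y => congrFun e y
  -- assemble the equivalence
  let Φhom : A →⋆ₐ[ℂ] B :=
    { toFun := Φ, map_one' := hΦone, map_mul' := hΦmul, map_zero' := hΦzero,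
      map_add' := hΦadd, commutes' := hΦalg, map_star' := hΦstar }
  have hbij : Function.Bijective Φhom := by
    constructor
    · intro x y hxy
      have := congrArg Ψ hxy
      show x = y
      rw [show (Φhom x : B) = Φ x from rfl, show (Φhom y : B) = Φ y from rfl] at hxy
      rw [← hleft x, ← hleft y, hxy]
    · intro y
      exact ⟨Ψ y, hright y⟩
  exact ⟨StarAlgEquiv.ofBijective Φhom hbij⟩
end
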